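/- There exists a nonzero real Banach space X such that inf_{x ∈ S_X} Δc(x) = 0 while Dc(x) > 0 for every x ∈ S_X. -/

import Mathlib

/-!
Take the ℓ₁-sum of the spaces `ℝ × c₀` normed by `max |t| (‖u‖ + wₙ |t|)`, with `wₙ = n/(n+1) → 1`.
In the `n`-th block the slice `{t > 1 - δ}` of the unit ball lies within distance about `1 - wₙ`
of the vertex `(1, 0)`, so the Δ-constants of these vertices tend to `0`. On the other hand,
moving a small `c₀`-coordinate shows that every point `z` of a block is the midpoint of a segment
of length comparable to `(1 - wₙ) ‖z‖` inside the ball of radius `‖z‖`. Given a unit vector `x`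
of the sum, concentrated up to `1/8` on finitely many blocks, a point `y` of norm close to `1` in
a slice either carries mass where `x` has almost none, or has a large block among those finitely
many, and moving that block inside the slice gives a point far from `x`.
-/

open Set Metric Filter

variable {X : Type*} [NormedAddCommGroup X] [NormedSpace ℝ X]

/-- The slice `S(f, δ)` of the closed unit ball of `X`, determined by a norm-one functional
`f` and `δ > 0` (the norm and positivity conditions are imposed at use sites). -/
def unitBallSlice (f : X →L[ℝ] ℝ) (δ : ℝ) : Set X :=
  {y | ‖y‖ ≤ 1 ∧ 1 - δ < f y}

/-- The Daugavet constant of a point: the infimum over all slices of the unit ball of the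
supremum of distances from `x` to points of the slice. -/
noncomputable def Dc (x : X) : ℝ :=
  sInf {r | ∃ (f : X →L[ℝ] ℝ) (δ : ℝ), ‖f‖ = 1 ∧ 0 < δ ∧
    r = sSup ((fun y => ‖x - y‖) '' unitBallSlice f δ)}

/-- The Δ-constant of a point: the infimum over all slices of the unit ball containing `x`
of the supremum of distances from `x` to points of the slice. -/
noncomputable def DeltaC (x : X) : ℝ :=
  sInf {r | ∃ (f : X →L[ℝ] ℝ) (δ : ℝ), ‖f‖ = 1 ∧ 0 < δ ∧ x ∈ unitBallSlice f δ ∧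
    r = sSup ((fun y => ‖x - y‖) '' unitBallSlice f δ)}

open scoped NNReal ZeroAtInfty

section Slices

lemma bddAbove_norm_sub_image_unitBallSlice (x : X) (f : X →L[ℝ] ℝ) (δ : ℝ) :
    BddAbove ((fun y => ‖x - y‖) '' unitBallSlice f δ) := by
  refine ⟨‖x‖ + 1, ?_⟩
  rintro _ ⟨y, hy, rfl⟩
  exact (norm_sub_le x y).trans (by linarith [hy.1])

lemma sSup_norm_sub_image_unitBallSlice_nonneg {x : X} {f : X →L[ℝ] ℝ} {δ : ℝ}
    (hx : x ∈ unitBallSlice f δ) : 0 ≤ sSup ((fun y => ‖x - y‖) '' unitBallSlice f δ) :=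
  le_csSup_of_le (bddAbove_norm_sub_image_unitBallSlice x f δ) ⟨x, hx, rfl⟩ (norm_nonneg _)

lemma unitBallSlice_mono (f : X →L[ℝ] ℝ) : Monotone (unitBallSlice f) :=
  fun _ _ hδ _ hy => ⟨hy.1, by linarith [hy.2]⟩

lemma unitBallSlice_nonempty {f : X →L[ℝ] ℝ} (hf : ‖f‖ = 1) {δ : ℝ} (hδ : 0 < δ) :
    (unitBallSlice f δ).Nonempty := by
  obtain ⟨y, hy, hfy⟩ := f.exists_lt_apply_of_lt_opNorm (r := 1 - δ) (by linarith)
  rw [Real.norm_eq_abs] at hfy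
  rcases le_or_gt 0 (f y) with h | h
  · exact ⟨y, hy.le, by rwa [abs_of_nonneg h] at hfy⟩
  · exact ⟨-y, by rw [norm_neg]; exact hy.le, by rwa [abs_of_neg h, ← map_neg] at hfy⟩

lemma one_sub_lt_norm_of_mem_unitBallSlice {f : X →L[ℝ] ℝ} (hf : ‖f‖ = 1) {δ : ℝ} {y : X}
    (hy : y ∈ unitBallSlice f δ) : 1 - δ < ‖y‖ :=
  hy.2.trans_le <| (le_abs_self _).trans <| by simpa [hf] using f.le_opNorm y

lemma exists_mem_unitBallSlice_norm_sub_eq {f : X →L[ℝ] ℝ} {δ : ℝ} {y v : X}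
    (hy : y ∈ unitBallSlice f δ) (hadd : ‖y + v‖ ≤ ‖y‖) (hsub : ‖y - v‖ ≤ ‖y‖) :
    ∃ w ∈ unitBallSlice f δ, ‖w - y‖ = ‖v‖ := by
  rcases le_total 0 (f v) with h | h
  · exact ⟨y + v, ⟨hadd.trans hy.1, by rw [map_add]; linarith [hy.2]⟩, by simp⟩
  · exact ⟨y - v, ⟨hsub.trans hy.1, by rw [map_sub]; linarith [hy.2]⟩, by simp⟩

lemma DeltaC_nonneg (x : X) : 0 ≤ DeltaC x :=
  Real.sInf_nonneg <| by
    rintro _ ⟨f, δ, -, -, hx, rfl⟩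
    exact sSup_norm_sub_image_unitBallSlice_nonneg hx

lemma DeltaC_le {x : X} {f : X →L[ℝ] ℝ} {δ r : ℝ} (hf : ‖f‖ = 1) (hδ : 0 < δ)
    (hx : x ∈ unitBallSlice f δ) (h : ∀ y ∈ unitBallSlice f δ, ‖x - y‖ ≤ r) :
    DeltaC x ≤ r := by
  unfold DeltaC
  refine csInf_le_of_le ?_ ⟨f, δ, hf, hδ, hx, rfl⟩ ?_
  · refine ⟨0, ?_⟩
    rintro _ ⟨g, η, -, -, hg, rfl⟩
    exact sSup_norm_sub_image_unitBallSlice_nonneg hg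
  · exact csSup_le ⟨_, x, hx, rfl⟩ (by rintro _ ⟨y, hy, rfl⟩; exact h y hy)

lemma le_Dc {x : X} (hx : x ≠ 0) {c : ℝ}
    (h : ∀ (f : X →L[ℝ] ℝ) (δ : ℝ), ‖f‖ = 1 → 0 < δ → ∃ y ∈ unitBallSlice f δ, c ≤ ‖x - y‖) :
    c ≤ Dc x := by
  obtain ⟨g, hg, -⟩ := exists_dual_vector ℝ x (norm_ne_zero_iff.2 hx)
  refine le_csInf ⟨_, g, 1, hg, one_pos, rfl⟩ ?_
  rintro _ ⟨f, δ, hf, hδ, rfl⟩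
  obtain ⟨y, hy, hcy⟩ := h f δ hf hδ
  exact le_csSup_of_le (bddAbove_norm_sub_image_unitBallSlice x f δ) ⟨y, hy, rfl⟩ hcy

end Slices

def HasCenteredSegments (κ : ℝ) (V : Type*) [NormedAddCommGroup V] [NormedSpace ℝ V] : Prop :=
  ∀ (z : V) (s : ℝ), |s| < κ * ‖z‖ → ∃ e : V, ‖e‖ = 1 ∧ ‖z + s • e‖ ≤ ‖z‖ ∧ ‖z - s • e‖ ≤ ‖z‖

namespace lp

variable {ι : Type*} {E : ι → Type*} [∀ i, NormedAddCommGroup (E i)]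

lemma hasSum_norm_one (y : lp E 1) : HasSum (fun i => ‖y i‖) ‖y‖ := by
  simpa using hasSum_norm (p := 1) (by norm_num) y

lemma norm_add_single_one [DecidableEq ι] (y : lp E 1) (i : ι) (z : E i) :
    ‖y + lp.single 1 i z‖ = ‖y‖ - ‖y i‖ + ‖y i + z‖ := by
  have hcoord : (fun k => ‖(y + lp.single 1 i z) k‖) =
      Function.update (fun k => ‖y k‖) i ‖y i + z‖ := by
    funext k
    rcases eq_or_ne k i with rfl | hk
    · simp
    · simp [hk]
  have h := (hasSum_norm_one y).update i ‖y i + z‖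
  rw [← hcoord] at h
  rw [(hasSum_norm_one _).unique h]
  ring

lemma norm_single_sub [DecidableEq ι] (y : lp E 1) (i : ι) (z : E i) :
    ‖lp.single 1 i z - y‖ = ‖y‖ - ‖y i‖ + ‖z - y i‖ := by
  rw [norm_sub_rev, sub_eq_add_neg, ← lp.single_neg, norm_add_single_one, ← sub_eq_add_neg,
    norm_sub_rev]

lemma sub_sum_norm_sub_le_norm_sub (x y : lp E 1) (F : Finset ι) :
    (‖y‖ - ∑ i ∈ F, ‖y i‖) - (‖x‖ - ∑ i ∈ F, ‖x i‖) ≤ ‖x - y‖ := by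
  have tail (z : lp E 1) : HasSum (fun i : {i // i ∉ F} => ‖z i‖) (‖z‖ - ∑ i ∈ F, ‖z i‖) :=
    F.hasSum_iff_compl.1 (hasSum_norm_one z)
  have hle : ‖x - y‖ - ∑ i ∈ F, ‖(x - y) i‖ ≤ ‖x - y‖ :=
    sub_le_self _ (F.sum_nonneg fun _ _ => norm_nonneg _)
  refine (hasSum_le (fun i => ?_) ((tail y).sub (tail x)) (tail (x - y))).trans hle
  rw [coeFn_sub, Pi.sub_apply, norm_sub_rev]
  exact norm_sub_norm_le _ _

variable [∀ i, NormedSpace ℝ (E i)]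

lemma exists_norm_add_smul_le_of_hasCenteredSegments [DecidableEq ι]
    {κ : ℝ} {i : ι} (hE : HasCenteredSegments κ (E i)) (y : lp E 1) {s : ℝ}
    (hs : |s| < κ * ‖y i‖) :
    ∃ v : lp E 1, ‖v‖ = 1 ∧ ‖y + s • v‖ ≤ ‖y‖ ∧ ‖y - s • v‖ ≤ ‖y‖ := by
  obtain ⟨e, he, hadd, hsub⟩ := hE (y i) s hs
  refine ⟨lp.single 1 i e, by simp [he, lp.norm_single], ?_, ?_⟩
  · rw [← lp.single_smul, norm_add_single_one]
    linarith
  · rw [← lp.single_smul, sub_eq_add_neg, ← lp.single_neg, norm_add_single_one, ← sub_eq_add_neg]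
    linarith

lemma exists_mem_unitBallSlice_le_norm_sub [DecidableEq ι] {κ : ℝ} {i : ι}
    (hE : HasCenteredSegments κ (E i)) (x : lp E 1) {f : lp E 1 →L[ℝ] ℝ} {δ : ℝ} {y : lp E 1}
    (hy : y ∈ unitBallSlice f δ) : ∃ z ∈ unitBallSlice f δ, κ * ‖y i‖ / 4 ≤ ‖x - z‖ := by
  rcases le_or_gt (κ * ‖y i‖) 0 with h | h
  · exact ⟨y, hy, by linarith [norm_nonneg (x - y)]⟩
  obtain ⟨v, hv, hadd, hsub⟩ := exists_norm_add_smul_le_of_hasCenteredSegments hE y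
    (s := κ * ‖y i‖ / 2) (by rw [abs_of_pos (by positivity)]; linarith)
  obtain ⟨w, hw, hwy⟩ := exists_mem_unitBallSlice_norm_sub_eq hy hadd hsub
  rw [norm_smul, hv, mul_one, Real.norm_of_nonneg (by positivity)] at hwy
  have htri : ‖w - y‖ ≤ ‖x - w‖ + ‖x - y‖ := by
    simpa only [norm_sub_rev w x] using norm_sub_le_norm_sub_add_norm_sub w x y
  rcases le_total ‖x - y‖ ‖x - w‖ with hle | hle
  · exact ⟨w, hw, by linarith⟩
  · exact ⟨y, hy, by linarith⟩

theorem Dc_pos_of_hasCenteredSegments {κ : ι → ℝ} (hκ : ∀ i, 0 < κ i)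
    (hE : ∀ i, HasCenteredSegments (κ i) (E i)) {x : lp E 1} (hx : ‖x‖ = 1) : 0 < Dc x := by
  classical
  obtain ⟨F, hF⟩ : ∃ F : Finset ι, 7 / 8 < ∑ i ∈ F, ‖x i‖ :=
    ((hasSum_norm_one x).eventually (lt_mem_nhds (by rw [hx]; norm_num))).exists
  have hFne : F.Nonempty := Finset.nonempty_of_sum_ne_zero (hF.trans' (by norm_num)).ne'
  set m := F.inf' hFne κ
  have hm : 0 < m := (Finset.lt_inf'_iff _).2 fun i _ => hκ i
  have hN : (0 : ℝ) < F.card := Nat.cast_pos.2 hFne.card_pos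
  refine (lt_min (by norm_num) (by positivity)).trans_le
    (le_Dc (c := min (1 / 8) (m * (5 / (8 * F.card)) / 4)) (by rintro rfl; simp at hx)
      fun f δ hf hδ => ?_)
  obtain ⟨y, hy⟩ := unitBallSlice_nonempty hf (lt_min hδ (by norm_num : (0 : ℝ) < 1 / 8))
  have hyδ : y ∈ unitBallSlice f δ := unitBallSlice_mono f (min_le_left _ _) hy
  have hy_norm : 7 / 8 < ‖y‖ := by
    linarith [one_sub_lt_norm_of_mem_unitBallSlice hf hy, min_le_right δ (1 / 8)]
  -- Either `y` has mass `> 1/4` off `F`, where `x` has mass `< 1/8`, or some block of `y`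
  -- inside `F` is large enough to be moved within the slice.
  rcases le_or_gt (∑ i ∈ F, ‖y i‖) (5 / 8) with hsmall | hbig
  · refine ⟨y, hyδ, (min_le_left _ _).trans ?_⟩
    linarith [sub_sum_norm_sub_le_norm_sub x y F]
  · obtain ⟨i, hiF, hi⟩ : ∃ i ∈ F, 5 / (8 * F.card) ≤ ‖y i‖ := by
      refine Finset.exists_le_of_sum_le hFne (le_of_eq_of_le ?_ hbig.le)
      rw [Finset.sum_const, nsmul_eq_mul]
      field_simp
    obtain ⟨z, hz, hxz⟩ := exists_mem_unitBallSlice_le_norm_sub (hE i) x hyδ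
    refine ⟨z, hz, (min_le_right _ _).trans (le_trans ?_ hxz)⟩
    gcongr
    · exact (hκ i).le
    · exact F.inf'_le κ hiF

end lp

namespace ZeroAtInftyContinuousMap

variable {α β : Type*} [TopologicalSpace α] [NormedAddCommGroup β]

lemma norm_apply_le (f : C₀(α, β)) (a : α) : ‖f a‖ ≤ ‖f‖ := by
  simpa [← norm_toBCF_eq_norm] using f.toBCF.norm_coe_le_norm a

lemma norm_le_of_forall_le {f : C₀(α, β)} {C : ℝ} (hC : 0 ≤ C) (h : ∀ a, ‖f a‖ ≤ C) :
    ‖f‖ ≤ C := by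
  simpa [← norm_toBCF_eq_norm] using (BoundedContinuousFunction.norm_le hC).2 h

def natIndicator (m : ℕ) : C₀(ℕ, ℝ) where
  toFun := Pi.single m 1
  continuous_toFun := continuous_of_discreteTopology
  zero_at_infty' := by
    rw [cocompact_eq_cofinite]
    exact tendsto_const_nhds.congr' <|
      (eventually_cofinite_ne m).mono fun k hk => by simp [hk]

lemma natIndicator_apply (m k : ℕ) : natIndicator m k = if k = m then 1 else 0 :=
  Pi.single_apply m 1 k

lemma exists_norm_eq_one_norm_add_smul_le (u : C₀(ℕ, ℝ)) {ε : ℝ} (hε : 0 < ε) :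
    ∃ e : C₀(ℕ, ℝ), ‖e‖ = 1 ∧ ∀ c : ℝ, ‖u + c • e‖ ≤ max ‖u‖ (ε + |c|) := by
  obtain ⟨m, hm⟩ : ∃ m, |u m| < ε := by
    have hu := u.zero_at_infty'
    rw [cocompact_eq_cofinite] at hu
    simpa using (hu.eventually (eventually_abs_sub_lt 0 hε)).exists
  refine ⟨natIndicator m, le_antisymm ?_ ?_, fun c => ?_⟩
  · exact norm_le_of_forall_le zero_le_one fun k => by
      rw [natIndicator_apply]; split_ifs <;> norm_num
  · simpa [natIndicator_apply] using norm_apply_le (natIndicator m) m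
  · refine norm_le_of_forall_le (by positivity) fun k => ?_
    simp only [coe_add, coe_smul, Pi.add_apply, Pi.smul_apply, smul_eq_mul, natIndicator_apply,
      Real.norm_eq_abs]
    split_ifs with hk
    · subst hk
      exact le_max_of_le_right ((abs_add_le _ _).trans (by rw [mul_one]; linarith))
    · simpa using le_max_of_le_left (norm_apply_le u k)

end ZeroAtInftyContinuousMap

/-- `ℝ × c₀` with the norm `max |t| (‖u‖ + w * |t|)` of `Block.addGroupNorm`. -/
def Block (_ : ℝ≥0) : Type := ℝ × C₀(ℕ, ℝ)

namespace Block

variable {w : ℝ≥0}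

instance : AddCommGroup (Block w) := inferInstanceAs (AddCommGroup (ℝ × C₀(ℕ, ℝ)))

instance : Module ℝ (Block w) := inferInstanceAs (Module ℝ (ℝ × C₀(ℕ, ℝ)))

def mk (t : ℝ) (u : C₀(ℕ, ℝ)) : Block w := (t, u)

@[simp] lemma fst_mk (t : ℝ) (u : C₀(ℕ, ℝ)) : (mk t u : Block w).1 = t := rfl
@[simp] lemma snd_mk (t : ℝ) (u : C₀(ℕ, ℝ)) : (mk t u : Block w).2 = u := rfl
@[simp] lemma fst_zero : (0 : Block w).1 = 0 := rfl
@[simp] lemma snd_zero : (0 : Block w).2 = 0 := rfl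
@[simp] lemma fst_add (a b : Block w) : (a + b).1 = a.1 + b.1 := rfl
@[simp] lemma snd_add (a b : Block w) : (a + b).2 = a.2 + b.2 := rfl
@[simp] lemma fst_neg (a : Block w) : (-a).1 = -a.1 := rfl
@[simp] lemma snd_neg (a : Block w) : (-a).2 = -a.2 := rfl
@[simp] lemma fst_sub (a b : Block w) : (a - b).1 = a.1 - b.1 := rfl
@[simp] lemma snd_sub (a b : Block w) : (a - b).2 = a.2 - b.2 := rfl
@[simp] lemma fst_smul (c : ℝ) (a : Block w) : (c • a).1 = c * a.1 := rfl
@[simp] lemma snd_smul (c : ℝ) (a : Block w) : (c • a).2 = c • a.2 := rfl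

noncomputable def addGroupNorm (w : ℝ≥0) : AddGroupNorm (Block w) where
  toFun z := max |z.1| (‖z.2‖ + w * |z.1|)
  map_zero' := by simp
  add_le' a b := by
    have hw : w * |a.1 + b.1| ≤ w * |a.1| + w * |b.1| := by
      rw [← mul_add]; exact mul_le_mul_of_nonneg_left (abs_add_le _ _) w.2
    have ha := le_max_right |a.1| (‖a.2‖ + w * |a.1|)
    have hb := le_max_right |b.1| (‖b.2‖ + w * |b.1|)
    simp only [fst_add, snd_add]
    refine max_le ((abs_add_le _ _).trans (add_le_add (le_max_left _ _) (le_max_left _ _))) ?_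
    linarith [norm_add_le a.2 b.2]
  neg' a := by simp
  eq_zero_of_map_eq_zero' z h := by
    have hz := h.le
    simp only [max_le_iff] at hz
    have h₁ : z.1 = 0 := abs_nonpos_iff.1 hz.1
    rw [h₁, abs_zero, mul_zero, add_zero] at hz
    exact Prod.ext h₁ (norm_le_zero_iff.1 hz.2)

noncomputable instance : NormedAddCommGroup (Block w) := (addGroupNorm w).toNormedAddCommGroup

lemma norm_def (z : Block w) : ‖z‖ = max |z.1| (‖z.2‖ + w * |z.1|) := rfl

noncomputable instance : NormedSpace ℝ (Block w) where
  norm_smul_le c z := by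
    rw [norm_def, norm_def, fst_smul, snd_smul, norm_smul, abs_mul, Real.norm_eq_abs,
      mul_left_comm, ← mul_add, mul_max_of_nonneg _ _ (abs_nonneg c)]

lemma abs_fst_le_norm (z : Block w) : |z.1| ≤ ‖z‖ := le_max_left _ _

lemma norm_snd_add_le_norm (z : Block w) : ‖z.2‖ + w * |z.1| ≤ ‖z‖ := le_max_right _ _

lemma norm_le_abs_fst_add_norm_snd (hw : w ≤ 1) (z : Block w) : ‖z‖ ≤ |z.1| + ‖z.2‖ := by
  have : w * |z.1| ≤ |z.1| := mul_le_of_le_one_left (abs_nonneg _) hw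
  exact max_le (by linarith [norm_nonneg z.2]) (by linarith)

lemma norm_le_one_add_mul_max (z : Block w) : ‖z‖ ≤ (1 + w) * max |z.1| ‖z.2‖ := by
  have h₁ : |z.1| ≤ max |z.1| ‖z.2‖ := le_max_left _ _
  have h₂ : ‖z.2‖ ≤ max |z.1| ‖z.2‖ := le_max_right _ _
  have h₃ : w * |z.1| ≤ w * max |z.1| ‖z.2‖ := mul_le_mul_of_nonneg_left h₁ w.2
  have h₄ : 0 ≤ w * max |z.1| ‖z.2‖ := mul_nonneg w.2 ((abs_nonneg _).trans h₁)
  exact max_le (by linarith) (by linarith)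

instance : CompleteSpace (Block w) := by
  let e : Block w ≃ ℝ × C₀(ℕ, ℝ) := Equiv.refl _
  refine (completeSpace_congr (e := e) ?_).2 inferInstance
  have hlip : LipschitzWith 1 e := LipschitzWith.of_dist_le_mul fun a b => by
    rw [NNReal.coe_one, one_mul, dist_eq_norm, dist_eq_norm, Prod.norm_def, Real.norm_eq_abs]
    exact max_le (abs_fst_le_norm (a - b))
      ((le_add_of_nonneg_right (by positivity)).trans (norm_snd_add_le_norm (a - b)))
  refine AntilipschitzWith.isUniformEmbedding (K := 1 + w)
    (AntilipschitzWith.of_le_mul_dist fun a b => ?_) hlip.uniformContinuous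
  rw [dist_eq_norm, dist_eq_norm, Prod.norm_def, Real.norm_eq_abs, NNReal.coe_add, NNReal.coe_one]
  exact norm_le_one_add_mul_max (a - b)

lemma hasCenteredSegments : HasCenteredSegments ((1 - (w : ℝ)) / 2) (Block w) := by
  intro z s hs
  obtain ⟨e, he, hle⟩ := ZeroAtInftyContinuousMap.exists_norm_eq_one_norm_add_smul_le z.2
    ((abs_nonneg s).trans_lt hs)
  have key : ∀ c : ℝ, |c| ≤ |s| → ‖z + c • mk 0 e‖ ≤ ‖z‖ := by
    intro c hc
    rw [norm_def]
    simp only [fst_add, snd_add, fst_smul, snd_smul, fst_mk, snd_mk, mul_zero, add_zero]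
    refine max_le (abs_fst_le_norm z) ?_
    have hw : w * |z.1| ≤ w * ‖z‖ := mul_le_mul_of_nonneg_left (abs_fst_le_norm z) w.2
    rcases le_max_iff.1 (hle c) with h | h
    · linarith [norm_snd_add_le_norm z]
    · linarith
  refine ⟨mk 0 e, ?_, key s le_rfl, ?_⟩
  · simp [norm_def, he]
  · rw [sub_eq_add_neg, ← neg_smul]
    exact key (-s) (abs_neg s).le

def vertex (w : ℝ≥0) : Block w := mk 1 0

lemma norm_vertex (hw : w ≤ 1) : ‖vertex w‖ = 1 := by
  simp [norm_def, vertex, hw]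

noncomputable def fstCLM (w : ℝ≥0) : Block w →L[ℝ] ℝ :=
  LinearMap.mkContinuous
    { toFun z := z.1
      map_add' := fst_add
      map_smul' := fst_smul }
    1 fun z => by simpa using abs_fst_le_norm z

@[simp] lemma fstCLM_apply (z : Block w) : fstCLM w z = z.1 := rfl

lemma norm_vertex_sub_le (hw : w ≤ 1) {z : Block w} {δ : ℝ} (hz : ‖z‖ ≤ 1) (hδ : 1 - δ < z.1) :
    ‖vertex w - z‖ ≤ 1 - w + 2 * δ := by
  have ht : z.1 ≤ 1 := (le_abs_self _).trans ((abs_fst_le_norm z).trans hz)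
  have hu := (norm_snd_add_le_norm z).trans hz
  have hwt : w * z.1 ≤ w * |z.1| := mul_le_mul_of_nonneg_left (le_abs_self _) w.2
  refine (norm_le_abs_fst_add_norm_snd hw _).trans ?_
  simp only [vertex, fst_sub, snd_sub, fst_mk, snd_mk, zero_sub, norm_neg]
  rw [abs_of_nonneg (by linarith)]
  nlinarith [w.2]

end Block

lemma norm_single_vertex {ι : Type*} [DecidableEq ι] {w : ι → ℝ≥0} (i : ι) (hw : w i ≤ 1) :
    ‖(lp.single 1 i (Block.vertex (w i)) : lp (fun i => Block (w i)) 1)‖ = 1 := by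
  simp [lp.norm_single, Block.norm_vertex hw]

lemma DeltaC_single_vertex_le {ι : Type*} [DecidableEq ι] {w : ι → ℝ≥0} (i : ι) (hw : w i ≤ 1) :
    DeltaC (lp.single 1 i (Block.vertex (w i)) : lp (fun i => Block (w i)) 1) ≤ 1 - w i := by
  set x : lp (fun i => Block (w i)) 1 := lp.single 1 i (Block.vertex (w i))
  have hx : ‖x‖ = 1 := norm_single_vertex i hw
  let g : lp (fun i => Block (w i)) 1 →L[ℝ] ℝ :=
    (Block.fstCLM (w i)).comp (lp.evalCLM ℝ (fun i => Block (w i)) 1 i)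
  have hg_apply (y : lp (fun i => Block (w i)) 1) : g y = (y i).1 := by simp [g, lp.evalCLM]
  have hgx : g x = 1 := by simp [hg_apply, x, Block.vertex]
  have hg : ‖g‖ = 1 := by
    refine le_antisymm (g.opNorm_le_bound zero_le_one fun y => ?_)
      (by simpa [hgx, hx] using g.le_opNorm x)
    rw [hg_apply, Real.norm_eq_abs, one_mul]
    exact (Block.abs_fst_le_norm (y i)).trans (lp.norm_apply_le_norm one_ne_zero y i)
  refine le_of_forall_pos_le_add fun ε hε => DeltaC_le hg (by positivity : 0 < ε / 3)
    ⟨hx.le, by rw [hgx]; linarith⟩ fun y hy => ?_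
  have hyi : 1 - ε / 3 < (y i).1 := hy.2
  have hyi_norm : ‖y i‖ ≤ 1 := (lp.norm_apply_le_norm one_ne_zero y i).trans hy.1
  rw [lp.norm_single_sub]
  linarith [hy.1, Block.abs_fst_le_norm (y i), le_abs_self (y i).1,
    Block.norm_vertex_sub_le hw hyi_norm hyi]

noncomputable def weight (n : ℕ) : ℝ≥0 := n / (n + 1)

lemma one_sub_weight (n : ℕ) : 1 - (weight n : ℝ) = 1 / (n + 1) := by
  simp only [weight, NNReal.coe_div, NNReal.coe_natCast, NNReal.coe_add, NNReal.coe_one]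
  field_simp
  ring

lemma weight_le_one (n : ℕ) : weight n ≤ 1 := by
  rw [← NNReal.coe_le_coe, NNReal.coe_one, ← sub_nonneg, one_sub_weight]
  positivity

/-- There is a nonzero Banach space in which the infimum of Δ-constants over the unit sphere
is zero, yet every unit-sphere point has positive Daugavet constant. -/
theorem exists_banach_inf_deltaConstant_zero_daugavetConstant_pos :
    ∃ (Y : Type) (_ : NormedAddCommGroup Y) (_ : NormedSpace ℝ Y) (_ : CompleteSpace Y)
      (_ : Nontrivial Y),
      sInf (DeltaC '' {x : Y | ‖x‖ = 1}) = 0 ∧ ∀ x : Y, ‖x‖ = 1 → 0 < Dc x := by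
  let x (n : ℕ) : lp (fun n => Block (weight n)) 1 := lp.single 1 n (Block.vertex (weight n))
  have hx (n : ℕ) : ‖x n‖ = 1 := norm_single_vertex n (weight_le_one n)
  have hbdd : BddBelow (DeltaC '' {z : lp (fun n => Block (weight n)) 1 | ‖z‖ = 1}) :=
    ⟨0, by rintro _ ⟨y, -, rfl⟩; exact DeltaC_nonneg y⟩
  refine ⟨lp (fun n => Block (weight n)) 1, inferInstance, inferInstance, inferInstance,
    nontrivial_of_ne (x 0) 0 (norm_ne_zero_iff.1 (by simp [hx])), le_antisymm ?_ ?_,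
    fun y hy => lp.Dc_pos_of_hasCenteredSegments (fun n => ?_)
      (fun n => Block.hasCenteredSegments) hy⟩
  · refine le_of_forall_pos_lt_add fun ε hε => ?_
    obtain ⟨n, hn⟩ := exists_nat_one_div_lt hε
    calc sInf _ ≤ DeltaC (x n) := csInf_le hbdd ⟨x n, hx n, rfl⟩
      _ ≤ 1 - weight n := DeltaC_single_vertex_le n (weight_le_one n)
      _ < 0 + ε := by rw [one_sub_weight, zero_add]; exact hn
  · exact Real.sInf_nonneg fun _ ⟨y, _, hy⟩ => hy ▸ DeltaC_nonneg y
  · rw [one_sub_weight]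
    positivity
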